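/- For every type A of Λ× one can construct a closed term h : A → A^π that is an isomorphism, where A^π is the product normal form of A. -/

import Mathlib

set_option autoImplicit false

/-- Types of the typed lambda calculus Λ× : generated from atomic types (`ν`) and the
constant atomic type `T` by `→` and `×`. -/
inductive Tyx (ν : Type) : Type
  | atom : ν → Tyx ν
  | unit : Tyx ν
  | arrow : Tyx ν → Tyx ν → Tyx ν
  | prod : Tyx ν → Tyx ν → Tyx ν

/-- A typing context. -/
abbrev Ctxx (ν : Type) : Type := List (Tyx ν)

/-- Typed de Bruijn variables. -/
inductive Varx {ν : Type} : Ctxx ν → Tyx ν → Type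
  | vz {Γ : Ctxx ν} {A : Tyx ν} : Varx (A :: Γ) A
  | vs {Γ : Ctxx ν} {A B : Tyx ν} : Varx Γ A → Varx (B :: Γ) A

/-- Typed terms of Λ×. -/
inductive Tmx {ν : Type} : Ctxx ν → Tyx ν → Type
  | var {Γ : Ctxx ν} {A : Tyx ν} : Varx Γ A → Tmx Γ A
  | app {Γ : Ctxx ν} {A B : Tyx ν} : Tmx Γ (Tyx.arrow A B) → Tmx Γ A → Tmx Γ B
  | lam {Γ : Ctxx ν} {A B : Tyx ν} : Tmx (A :: Γ) B → Tmx Γ (Tyx.arrow A B)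
  | pair {Γ : Ctxx ν} {A B : Tyx ν} : Tmx Γ A → Tmx Γ B → Tmx Γ (Tyx.prod A B)
  | p1 {Γ : Ctxx ν} {A B : Tyx ν} : Tmx Γ (Tyx.prod A B) → Tmx Γ A
  | p2 {Γ : Ctxx ν} {A B : Tyx ν} : Tmx Γ (Tyx.prod A B) → Tmx Γ B
  | k {Γ : Ctxx ν} : Tmx Γ Tyx.unit

/-- Renamings between contexts. -/
def Renx {ν : Type} (Γ Δ : Ctxx ν) : Type := ∀ A : Tyx ν, Varx Γ A → Varx Δ A

def Renx.ext {ν : Type} {Γ Δ : Ctxx ν} (ρ : Renx Γ Δ) (A : Tyx ν) :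
    ∀ B : Tyx ν, Varx (A :: Γ) B → Varx (A :: Δ) B
  | _, .vz => .vz
  | _, .vs w => .vs (ρ _ w)

def Tmx.rename {ν : Type} : ∀ {Γ Δ : Ctxx ν} {A : Tyx ν}, Renx Γ Δ → Tmx Γ A → Tmx Δ A
  | _, _, _, ρ, .var v => .var (ρ _ v)
  | _, _, _, ρ, .app f a => .app (f.rename ρ) (a.rename ρ)
  | _, _, _, ρ, .lam b => .lam (b.rename (Renx.ext ρ _))
  | _, _, _, ρ, .pair a b => .pair (a.rename ρ) (b.rename ρ)
  | _, _, _, ρ, .p1 a => .p1 (a.rename ρ)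
  | _, _, _, ρ, .p2 a => .p2 (a.rename ρ)
  | _, _, _, _, .k => .k

/-- Simultaneous substitutions. -/
def Substx {ν : Type} (Γ Δ : Ctxx ν) : Type := ∀ A : Tyx ν, Varx Γ A → Tmx Δ A

def Substx.ext {ν : Type} {Γ Δ : Ctxx ν} (σ : Substx Γ Δ) (A : Tyx ν) :
    ∀ B : Tyx ν, Varx (A :: Γ) B → Tmx (A :: Δ) B
  | _, .vz => .var .vz
  | _, .vs w => (σ _ w).rename (fun _ => Varx.vs)

def Tmx.subst {ν : Type} : ∀ {Γ Δ : Ctxx ν} {A : Tyx ν}, Substx Γ Δ → Tmx Γ A → Tmx Δ A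
  | _, _, _, σ, .var v => σ _ v
  | _, _, _, σ, .app f a => .app (f.subst σ) (a.subst σ)
  | _, _, _, σ, .lam b => .lam (b.subst (Substx.ext σ _))
  | _, _, _, σ, .pair a b => .pair (a.subst σ) (b.subst σ)
  | _, _, _, σ, .p1 a => .p1 (a.subst σ)
  | _, _, _, σ, .p2 a => .p2 (a.subst σ)
  | _, _, _, _, .k => .k

def Substx.cons {ν : Type} {Γ Δ : Ctxx ν} {A : Tyx ν} (b : Tmx Δ A) (σ : Substx Γ Δ) :
    ∀ B : Tyx ν, Varx (A :: Γ) B → Tmx Δ B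
  | _, .vz => b
  | _, .vs w => σ _ w

/-- Substitution of a single term for the last variable: `a[b/x]`. -/
def Tmx.subst1 {ν : Type} {Γ : Ctxx ν} {A B : Tyx ν} (a : Tmx (A :: Γ) B) (b : Tmx Γ A) :
    Tmx Γ B :=
  a.subst (Substx.cons b (fun _ v => .var v))

/-- The theory Λ× of βη-equality with surjective pairing and terminal type `T`. -/
inductive Eqvx {ν : Type} : ∀ {Γ : Ctxx ν} {A : Tyx ν}, Tmx Γ A → Tmx Γ A → Prop
  | refl {Γ : Ctxx ν} {A : Tyx ν} (a : Tmx Γ A) : Eqvx a a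
  | symm {Γ : Ctxx ν} {A : Tyx ν} {a b : Tmx Γ A} : Eqvx a b → Eqvx b a
  | trans {Γ : Ctxx ν} {A : Tyx ν} {a b c : Tmx Γ A} : Eqvx a b → Eqvx b c → Eqvx a c
  | congApp {Γ : Ctxx ν} {A B : Tyx ν} {f g : Tmx Γ (Tyx.arrow A B)} {a b : Tmx Γ A} :
      Eqvx f g → Eqvx a b → Eqvx (.app f a) (.app g b)
  | congLam {Γ : Ctxx ν} {A B : Tyx ν} {a b : Tmx (A :: Γ) B} :
      Eqvx a b → Eqvx (.lam a) (.lam b)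
  | congPair {Γ : Ctxx ν} {A B : Tyx ν} {a a' : Tmx Γ A} {b b' : Tmx Γ B} :
      Eqvx a a' → Eqvx b b' → Eqvx (.pair a b) (.pair a' b')
  | congP1 {Γ : Ctxx ν} {A B : Tyx ν} {a b : Tmx Γ (Tyx.prod A B)} :
      Eqvx a b → Eqvx (.p1 a) (.p1 b)
  | congP2 {Γ : Ctxx ν} {A B : Tyx ν} {a b : Tmx Γ (Tyx.prod A B)} :
      Eqvx a b → Eqvx (.p2 a) (.p2 b)
  | beta {Γ : Ctxx ν} {A B : Tyx ν} (a : Tmx (A :: Γ) B) (b : Tmx Γ A) :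
      Eqvx (.app (.lam a) b) (a.subst1 b)
  | eta {Γ : Ctxx ν} {A B : Tyx ν} (a : Tmx Γ (Tyx.arrow A B)) :
      Eqvx (.lam (.app (a.rename (fun _ => Varx.vs)) (.var .vz))) a
  | prodBeta1 {Γ : Ctxx ν} {A B : Tyx ν} (a : Tmx Γ A) (b : Tmx Γ B) :
      Eqvx (.p1 (.pair a b)) a
  | prodBeta2 {Γ : Ctxx ν} {A B : Tyx ν} (a : Tmx Γ A) (b : Tmx Γ B) :
      Eqvx (.p2 (.pair a b)) b
  | prodEta {Γ : Ctxx ν} {A B : Tyx ν} (c : Tmx Γ (Tyx.prod A B)) :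
      Eqvx (.pair (.p1 c) (.p2 c)) c
  | unit {Γ : Ctxx ν} (a : Tmx Γ Tyx.unit) : Eqvx a .k

def Varx.elim0 {ν : Type} {A : Tyx ν} {C : Sort*} : Varx ([] : Ctxx ν) A → C :=
  fun v => nomatch v

/-- Weakening of a closed term into an arbitrary context. -/
def Tmx.wk {ν : Type} {Δ : Ctxx ν} {A : Tyx ν} (t : Tmx ([] : Ctxx ν) A) : Tmx Δ A :=
  t.rename (fun _ v => v.elim0)

/-- One-step reduction of types of Λ× (replacement of a redex subtype by its
contractum). -/
inductive TyStep {ν : Type} : Tyx ν → Tyx ν → Prop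
  | arrProd (A B₁ B₂ : Tyx ν) :
      TyStep (.arrow A (.prod B₁ B₂)) (.prod (.arrow A B₁) (.arrow A B₂))
  | prodArr (A₁ A₂ B : Tyx ν) :
      TyStep (.arrow (.prod A₁ A₂) B) (.arrow A₁ (.arrow A₂ B))
  | prodAssoc (A B C : Tyx ν) :
      TyStep (.prod A (.prod B C)) (.prod (.prod A B) C)
  | arrUnit (A : Tyx ν) : TyStep (.arrow A .unit) .unit
  | unitArr (B : Tyx ν) : TyStep (.arrow .unit B) B
  | prodUnit (A : Tyx ν) : TyStep (.prod A .unit) A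
  | unitProd (A : Tyx ν) : TyStep (.prod .unit A) A
  | arrL {A A' : Tyx ν} (B : Tyx ν) : TyStep A A' → TyStep (.arrow A B) (.arrow A' B)
  | arrR (A : Tyx ν) {B B' : Tyx ν} : TyStep B B' → TyStep (.arrow A B) (.arrow A B')
  | prodL {A A' : Tyx ν} (B : Tyx ν) : TyStep A A' → TyStep (.prod A B) (.prod A' B)
  | prodR (A : Tyx ν) {B B' : Tyx ν} : TyStep B B' → TyStep (.prod A B) (.prod A B')

/-- A type is in product normal form iff none of its subtypes is a redex, i.e. iff no
type reduction applies to it. -/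
def PNF {ν : Type} (A : Tyx ν) : Prop := ∀ B : Tyx ν, ¬ TyStep A B

/-- A closed term `f : A → B` of Λ× is an isomorphism iff there is a term `g : B → A`
such that for `x : A` and `y : B` one can prove `g(f x) = x` and `f(g y) = y` in Λ×. -/
def IsIso {ν : Type} {A B : Tyx ν} (f : Tmx ([] : Ctxx ν) (Tyx.arrow A B)) : Prop :=
  ∃ g : Tmx ([] : Ctxx ν) (Tyx.arrow B A),
    Eqvx (Tmx.app g.wk (Tmx.app f.wk (.var .vz)) : Tmx [A] A) (.var .vz) ∧
    Eqvx (Tmx.app f.wk (Tmx.app g.wk (.var .vz)) : Tmx [B] B) (.var .vz)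

attribute [reducible] Renx Substx

section Infra
variable {ν : Type}

theorem Renx.ext_comp {Γ Δ E : Ctxx ν} (ρ : Renx Γ Δ) (ρ' : Renx Δ E) (A : Tyx ν) :
    (Renx.ext (fun B v => ρ' B (ρ B v)) A) =
      fun B v => Renx.ext ρ' A B (Renx.ext ρ A B v) := by
  funext B v; cases v <;> rfl

theorem Tmx.rename_rename {Γ Δ E : Ctxx ν} {A : Tyx ν} (t : Tmx Γ A) (ρ : Renx Γ Δ)
    (ρ' : Renx Δ E) :
    (t.rename ρ).rename ρ' = t.rename (fun B v => ρ' B (ρ B v)) := by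
  induction t generalizing Δ E ρ' with
  | var v => rfl
  | app f a ihf iha => simp [Tmx.rename, ihf, iha]
  | lam b ih => simp [Tmx.rename, ih, Renx.ext_comp]
  | pair a b iha ihb => simp [Tmx.rename, iha, ihb]
  | p1 a ih => simp [Tmx.rename, ih]
  | p2 a ih => simp [Tmx.rename, ih]
  | k => rfl

theorem Substx.ext_ren_comp {Γ Δ E : Ctxx ν} (ρ : Renx Γ Δ) (σ : Substx Δ E) (A : Tyx ν) :
    (Substx.ext (fun B v => σ B (ρ B v)) A) =
      fun B v => Substx.ext σ A B (Renx.ext ρ A B v) := by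
  funext B v; cases v <;> rfl

theorem Tmx.subst_rename {Γ Δ E : Ctxx ν} {A : Tyx ν} (t : Tmx Γ A) (ρ : Renx Γ Δ)
    (σ : Substx Δ E) :
    (t.rename ρ).subst σ = t.subst (fun B v => σ B (ρ B v)) := by
  induction t generalizing Δ E with
  | var v => rfl
  | app f a ihf iha => simp [Tmx.rename, Tmx.subst, ihf, iha]
  | lam b ih => simp [Tmx.rename, Tmx.subst, ih, Substx.ext_ren_comp]
  | pair a b iha ihb => simp [Tmx.rename, Tmx.subst, iha, ihb]
  | p1 a ih => simp [Tmx.rename, Tmx.subst, ih]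
  | p2 a ih => simp [Tmx.rename, Tmx.subst, ih]
  | k => rfl

theorem Substx.ext_sub_ren {Γ Δ E : Ctxx ν} (σ : Substx Γ Δ) (ρ : Renx Δ E) (A : Tyx ν) :
    (Substx.ext (fun B v => (σ B v).rename ρ) A) =
      fun B v => (Substx.ext σ A B v).rename (Renx.ext ρ A) := by
  funext B v; cases v with
  | vz => rfl
  | vs w =>
    show ((σ _ w).rename ρ).rename (fun _ => Varx.vs) =
      ((σ _ w).rename (fun _ => Varx.vs)).rename (Renx.ext ρ A)
    rw [Tmx.rename_rename, Tmx.rename_rename]; rfl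

theorem Tmx.rename_subst {Γ Δ E : Ctxx ν} {A : Tyx ν} (t : Tmx Γ A) (σ : Substx Γ Δ)
    (ρ : Renx Δ E) :
    (t.subst σ).rename ρ = t.subst (fun B v => (σ B v).rename ρ) := by
  induction t generalizing Δ E with
  | var v => rfl
  | app f a ihf iha => simp [Tmx.rename, Tmx.subst, ihf, iha]
  | lam b ih => simp [Tmx.rename, Tmx.subst, ih, Substx.ext_sub_ren]
  | pair a b iha ihb => simp [Tmx.rename, Tmx.subst, iha, ihb]
  | p1 a ih => simp [Tmx.rename, Tmx.subst, ih]
  | p2 a ih => simp [Tmx.rename, Tmx.subst, ih]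
  | k => rfl

theorem Substx.ext_comp {Γ Δ E : Ctxx ν} (σ : Substx Γ Δ) (σ' : Substx Δ E) (A : Tyx ν) :
    (Substx.ext (fun B v => (σ B v).subst σ') A) =
      fun B v => (Substx.ext σ A B v).subst (Substx.ext σ' A) := by
  funext B v; cases v with
  | vz => rfl
  | vs w =>
    show ((σ _ w).subst σ').rename (fun _ => Varx.vs) =
      ((σ _ w).rename (fun _ => Varx.vs)).subst (Substx.ext σ' A)
    rw [Tmx.rename_subst, Tmx.subst_rename]; rfl

theorem Tmx.subst_subst {Γ Δ E : Ctxx ν} {A : Tyx ν} (t : Tmx Γ A) (σ : Substx Γ Δ)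
    (σ' : Substx Δ E) :
    (t.subst σ).subst σ' = t.subst (fun B v => (σ B v).subst σ') := by
  induction t generalizing Δ E σ' with
  | var v => rfl
  | app f a ihf iha => simp [Tmx.subst, ihf, iha]
  | lam b ih => simp [Tmx.subst, ih, Substx.ext_comp]
  | pair a b iha ihb => simp [Tmx.subst, iha, ihb]
  | p1 a ih => simp [Tmx.subst, ih]
  | p2 a ih => simp [Tmx.subst, ih]
  | k => rfl

theorem Substx.ext_var {Γ Δ : Ctxx ν} (ρ : Renx Γ Δ) (A : Tyx ν) :
    (Substx.ext (fun B v => Tmx.var (ρ B v)) A) =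
      fun B v => Tmx.var (Renx.ext ρ A B v) := by
  funext B v; cases v <;> rfl

theorem Tmx.subst_var {Γ Δ : Ctxx ν} {A : Tyx ν} (t : Tmx Γ A) (ρ : Renx Γ Δ) :
    t.subst (fun B v => Tmx.var (ρ B v)) = t.rename ρ := by
  induction t generalizing Δ with
  | var v => rfl
  | app f a ihf iha => simp [Tmx.subst, Tmx.rename, ihf, iha]
  | lam b ih => simp [Tmx.subst, Tmx.rename, Substx.ext_var, ih]
  | pair a b iha ihb => simp [Tmx.subst, Tmx.rename, iha, ihb]
  | p1 a ih => simp [Tmx.subst, Tmx.rename, ih]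
  | p2 a ih => simp [Tmx.subst, Tmx.rename, ih]
  | k => rfl

end Infra
section EqvSubst
variable {ν : Type}

theorem Tmx.rename_id {Γ : Ctxx ν} {A : Tyx ν} (t : Tmx Γ A) :
    t.rename (fun _ v => v) = t := by
  induction t with
  | var v => rfl
  | app f a ihf iha => simp [Tmx.rename, ihf, iha]
  | lam b ih =>
    rename_i Γ' A' B'
    have : (Renx.ext (Γ := Γ') (Δ := Γ') (fun _ v => v) A') = (fun _ v => v) := by
      funext B v; cases v <;> rfl
    simp [Tmx.rename, this, ih]
  | pair a b iha ihb => simp [Tmx.rename, iha, ihb]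
  | p1 a ih => simp [Tmx.rename, ih]
  | p2 a ih => simp [Tmx.rename, ih]
  | k => rfl

theorem Tmx.subst_id {Γ : Ctxx ν} {A : Tyx ν} (t : Tmx Γ A) :
    t.subst (fun _ v => Tmx.var v) = t := by
  rw [show (fun (B : Tyx ν) (v : Varx Γ B) => Tmx.var v) =
    (fun B v => Tmx.var ((fun _ w => w) B v)) from rfl, Tmx.subst_var, Tmx.rename_id]

theorem Eqvx.substc {Γ Δ : Ctxx ν} {A : Tyx ν} {a b : Tmx Γ A} (h : Eqvx a b)
    (σ : Substx Γ Δ) : Eqvx (a.subst σ) (b.subst σ) := by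
  induction h generalizing Δ with
  | refl a => exact Eqvx.refl _
  | symm _ ih => exact (ih σ).symm
  | trans _ _ ih1 ih2 => exact (ih1 σ).trans (ih2 σ)
  | congApp _ _ ihf iha => exact Eqvx.congApp (ihf σ) (iha σ)
  | congLam _ ih => exact Eqvx.congLam (ih _)
  | congPair _ _ iha ihb => exact Eqvx.congPair (iha σ) (ihb σ)
  | congP1 _ ih => exact Eqvx.congP1 (ih σ)
  | congP2 _ ih => exact Eqvx.congP2 (ih σ)
  | beta a b =>
    show Eqvx (Tmx.app (Tmx.lam (a.subst _)) (b.subst σ)) _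
    refine (Eqvx.beta _ _).trans ?_
    rw [show ((a.subst (Substx.ext σ _)).subst1 (b.subst σ)) =
        ((a.subst1 b).subst σ) from ?_]
    · exact Eqvx.refl _
    · unfold Tmx.subst1
      rw [Tmx.subst_subst, Tmx.subst_subst]
      congr 1; funext B v
      cases v with
      | vz => rfl
      | vs w =>
        show ((σ B w).rename _).subst _ = (Substx.cons b (fun _ v => Tmx.var v) B w.vs).subst σ
        rw [Tmx.subst_rename]
        show (σ B w).subst (fun _ v => Tmx.var v) = (Tmx.var w).subst σ
        rw [Tmx.subst_id]; rfl
  | eta a =>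
    show Eqvx (Tmx.lam (Tmx.app ((a.rename _).subst _) (Tmx.var .vz))) _
    rw [Tmx.subst_rename,
      show (a.subst fun B v => Substx.ext σ _ B (Varx.vs v)) =
        ((a.subst σ).rename (fun _ => Varx.vs)) from by rw [Tmx.rename_subst]; rfl]
    exact Eqvx.eta _
  | prodBeta1 a b => exact Eqvx.prodBeta1 _ _
  | prodBeta2 a b => exact Eqvx.prodBeta2 _ _
  | prodEta c => exact Eqvx.prodEta _
  | unit a => exact Eqvx.unit _

end EqvSubst
section Helpers
variable {ν : Type}

def nilSub {Δ : Ctxx ν} : Substx ([] : Ctxx ν) Δ := fun _ v => v.elim0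

def sub0 {Δ : Ctxx ν} {A : Tyx ν} (t : Tmx Δ A) : Substx [A] Δ := Substx.cons t nilSub

theorem wk_subst {Δ Δ' : Ctxx ν} {A : Tyx ν} (t : Tmx ([] : Ctxx ν) A) (σ : Substx Δ Δ') :
    (Tmx.wk t).subst σ = Tmx.wk t := by
  unfold Tmx.wk
  rw [Tmx.subst_rename]
  rw [show (fun B v => σ B (Varx.elim0 v)) =
      (fun B (v : Varx ([] : Ctxx ν) B) => Tmx.var (Varx.elim0 (C := Varx Δ' B) v)) from by
    funext B v; exact v.elim0]
  rw [Tmx.subst_var]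

theorem wk_rename {Δ Δ' : Ctxx ν} {A : Tyx ν} (t : Tmx ([] : Ctxx ν) A) (ρ : Renx Δ Δ') :
    (Tmx.wk t).rename ρ = Tmx.wk t := by
  unfold Tmx.wk
  rw [Tmx.rename_rename]
  congr 1
  funext B v; exact v.elim0

theorem beta_wk {A B : Tyx ν} (b : Tmx [A] B) {Δ : Ctxx ν} (t : Tmx Δ A) :
    Eqvx (Tmx.app (Tmx.wk (Tmx.lam b)) t) (b.subst (sub0 t)) := by
  show Eqvx (Tmx.app (Tmx.lam (b.rename _)) t) _
  refine (Eqvx.beta _ _).trans ?_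
  unfold Tmx.subst1
  rw [Tmx.subst_rename]
  rw [show (fun B v => Substx.cons t (fun _ w => Tmx.var w) B
      (Renx.ext (fun _ v => Varx.elim0 v) A B v)) = sub0 t from by
    funext C v
    cases v with
    | vz => rfl
    | vs w => exact w.elim0]
  exact Eqvx.refl _

theorem beta_wk' {A B : Tyx ν} (b : Tmx [A] B) {Δ : Ctxx ν} (t : Tmx Δ A) (s : Tmx Δ B)
    (hs : b.subst (sub0 t) = s) : Eqvx (Tmx.app (Tmx.wk (Tmx.lam b)) t) s := by
  rw [← hs]; exact beta_wk b t

/-- Instantiation of the isomorphism equation at an arbitrary argument. -/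
theorem gf_inst {A B : Tyx ν} {f : Tmx ([] : Ctxx ν) (Tyx.arrow A B)}
    {g : Tmx ([] : Ctxx ν) (Tyx.arrow B A)}
    (e : Eqvx (Tmx.app g.wk (Tmx.app f.wk (.var .vz)) : Tmx [A] A) (.var .vz))
    {Δ : Ctxx ν} (t : Tmx Δ A) :
    Eqvx (Tmx.app g.wk (Tmx.app f.wk t)) t := by
  have h := e.substc (sub0 t)
  simpa [Tmx.subst, wk_subst, sub0, Substx.cons] using h

/-- Existence of an isomorphism between two types. -/
def Isox (A B : Tyx ν) : Prop :=
  ∃ (f : Tmx ([] : Ctxx ν) (Tyx.arrow A B)) (g : Tmx ([] : Ctxx ν) (Tyx.arrow B A)),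
    Eqvx (Tmx.app g.wk (Tmx.app f.wk (.var .vz)) : Tmx [A] A) (.var .vz) ∧
    Eqvx (Tmx.app f.wk (Tmx.app g.wk (.var .vz)) : Tmx [B] B) (.var .vz)

theorem Isox.isIso {A B : Tyx ν} (h : Isox A B) :
    ∃ f : Tmx ([] : Ctxx ν) (Tyx.arrow A B), IsIso f := by
  obtain ⟨f, g, e1, e2⟩ := h
  exact ⟨f, g, e1, e2⟩

theorem Isox.refl (A : Tyx ν) : Isox A A := by
  refine ⟨Tmx.lam (.var .vz), Tmx.lam (.var .vz), ?_, ?_⟩ <;>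
  · refine Eqvx.trans (Eqvx.congApp (Eqvx.refl _) (beta_wk' _ _ (.var .vz) rfl)) ?_
    exact beta_wk' _ _ (.var .vz) rfl

theorem Isox.symm {A B : Tyx ν} (h : Isox A B) : Isox B A := by
  obtain ⟨f, g, e1, e2⟩ := h
  exact ⟨g, f, e2, e1⟩

end Helpers

section Eta
variable {ν : Type}
theorem eta' {Γ : Ctxx ν} {A B : Tyx ν} (a : Tmx Γ (Tyx.arrow A B))
    (s : Tmx (A :: Γ) (Tyx.arrow A B)) (hs : a.rename (fun _ => Varx.vs) = s) :
    Eqvx (.lam (.app s (.var .vz))) a := hs ▸ Eqvx.eta a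
end Eta
section Cong
variable {ν : Type}

theorem beta1' {Γ : Ctxx ν} {A B : Tyx ν} (a : Tmx (A :: Γ) B) (b : Tmx Γ A) (s : Tmx Γ B)
    (hs : a.subst1 b = s) : Eqvx (.app (.lam a) b) s := hs ▸ Eqvx.beta a b

/-- Composition of closed function terms. -/
def compx {A B C : Tyx ν} (f2 : Tmx ([] : Ctxx ν) (Tyx.arrow B C))
    (f1 : Tmx ([] : Ctxx ν) (Tyx.arrow A B)) : Tmx ([] : Ctxx ν) (Tyx.arrow A C) :=
  .lam (.app f2.wk (.app f1.wk (.var .vz)))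

theorem comp_half {A B C : Tyx ν}
    {f1 : Tmx ([] : Ctxx ν) (Tyx.arrow A B)} {g1 : Tmx ([] : Ctxx ν) (Tyx.arrow B A)}
    {f2 : Tmx ([] : Ctxx ν) (Tyx.arrow B C)} {g2 : Tmx ([] : Ctxx ν) (Tyx.arrow C B)}
    (e1 : Eqvx (Tmx.app g1.wk (Tmx.app f1.wk (.var .vz)) : Tmx [A] A) (.var .vz))
    (e2 : Eqvx (Tmx.app g2.wk (Tmx.app f2.wk (.var .vz)) : Tmx [B] B) (.var .vz)) :
    Eqvx (Tmx.app (compx g1 g2).wk (Tmx.app (compx f2 f1).wk (.var .vz)) : Tmx [A] A)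
      (.var .vz) := by
  have s1 : Eqvx (Tmx.app (compx f2 f1).wk (.var .vz) : Tmx [A] C)
      (.app f2.wk (.app f1.wk (.var .vz))) :=
    beta_wk' _ _ _ (by simp only [Tmx.subst, wk_subst, sub0, Substx.cons])
  have s2 : Eqvx (Tmx.app (compx g1 g2).wk (.app f2.wk (.app f1.wk (.var .vz))) : Tmx [A] A)
      (.app g1.wk (.app g2.wk (.app f2.wk (.app f1.wk (.var .vz))))) :=
    beta_wk' _ _ _ (by simp only [Tmx.subst, wk_subst, sub0, Substx.cons])
  refine ((Eqvx.congApp (Eqvx.refl _) s1).trans (s2.trans ?_))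
  exact (Eqvx.congApp (Eqvx.refl _) (gf_inst e2 _)).trans (gf_inst e1 _)

theorem Isox.trans {A B C : Tyx ν} (h1 : Isox A B) (h2 : Isox B C) : Isox A C := by
  obtain ⟨f1, g1, e11, e12⟩ := h1
  obtain ⟨f2, g2, e21, e22⟩ := h2
  exact ⟨compx f2 f1, compx g1 g2, comp_half e11 e21, comp_half e22 e12⟩

/-- `(A → B) → (A' → B)`, precomposition with `h : A' → A`. -/
def mkArrL {A A' B : Tyx ν} (h : Tmx ([] : Ctxx ν) (Tyx.arrow A' A)) :
    Tmx ([] : Ctxx ν) (Tyx.arrow (Tyx.arrow A B) (Tyx.arrow A' B)) :=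
  .lam (.lam (.app (.var (.vs .vz)) (.app h.wk (.var .vz))))

theorem arrL_half {A A' B : Tyx ν}
    {f : Tmx ([] : Ctxx ν) (Tyx.arrow A A')} {g : Tmx ([] : Ctxx ν) (Tyx.arrow A' A)}
    (e1 : Eqvx (Tmx.app g.wk (Tmx.app f.wk (.var .vz)) : Tmx [A] A) (.var .vz)) :
    Eqvx (Tmx.app (mkArrL (B := B) f).wk (Tmx.app (mkArrL (B := B) g).wk (.var .vz))
      : Tmx [Tyx.arrow A B] (Tyx.arrow A B)) (.var .vz) := by
  have s1 : Eqvx (Tmx.app (mkArrL (B := B) g).wk (.var .vz)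
        : Tmx [Tyx.arrow A B] (Tyx.arrow A' B))
      (.lam (.app (.var (.vs .vz)) (.app g.wk (.var .vz)))) :=
    beta_wk' _ _ _ (by
      simp only [Tmx.subst, Tmx.rename, wk_subst, wk_rename, sub0, nilSub, Substx.cons,
        Substx.ext])
  have s2 : Eqvx (Tmx.app (mkArrL (B := B) f).wk
        ((.lam (.app (.var (.vs .vz)) (.app g.wk (.var .vz))))
          : Tmx [Tyx.arrow A B] (Tyx.arrow A' B)))
      (.lam (.app (.lam (.app (.var (.vs (.vs .vz))) (.app g.wk (.var .vz))))
        (.app f.wk (.var .vz)))) :=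
    beta_wk' _ _ _ (by
      simp only [Tmx.subst, Tmx.rename, wk_subst, wk_rename, sub0, nilSub, Substx.cons,
        Substx.ext, Renx.ext])
  refine (Eqvx.congApp (Eqvx.refl _) s1).trans (s2.trans ?_)
  have s3 : Eqvx (Tmx.app (.lam (.app (.var (.vs (.vs .vz))) (.app g.wk (.var .vz))))
        (.app f.wk (.var .vz)) : Tmx [A, Tyx.arrow A B] B)
      (.app (.var (.vs .vz)) (.app g.wk (.app f.wk (.var .vz)))) :=
    beta1' _ _ _ (by
      simp only [Tmx.subst1, Tmx.subst, Tmx.rename, wk_subst, Substx.cons])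
  refine (Eqvx.congLam (s3.trans ?_)).trans (Eqvx.eta (.var .vz))
  exact Eqvx.congApp (Eqvx.refl _) (gf_inst e1 _)

/-- `(A → B) → (A → B')`, postcomposition with `h : B → B'`. -/
def mkArrR {A B B' : Tyx ν} (h : Tmx ([] : Ctxx ν) (Tyx.arrow B B')) :
    Tmx ([] : Ctxx ν) (Tyx.arrow (Tyx.arrow A B) (Tyx.arrow A B')) :=
  .lam (.lam (.app h.wk (.app (.var (.vs .vz)) (.var .vz))))

theorem arrR_half {A B B' : Tyx ν}
    {f : Tmx ([] : Ctxx ν) (Tyx.arrow B B')} {g : Tmx ([] : Ctxx ν) (Tyx.arrow B' B)}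
    (e1 : Eqvx (Tmx.app g.wk (Tmx.app f.wk (.var .vz)) : Tmx [B] B) (.var .vz)) :
    Eqvx (Tmx.app (mkArrR (A := A) g).wk (Tmx.app (mkArrR (A := A) f).wk (.var .vz))
      : Tmx [Tyx.arrow A B] (Tyx.arrow A B)) (.var .vz) := by
  have s1 : Eqvx (Tmx.app (mkArrR (A := A) f).wk (.var .vz)
        : Tmx [Tyx.arrow A B] (Tyx.arrow A B'))
      (.lam (.app f.wk (.app (.var (.vs .vz)) (.var .vz)))) :=
    beta_wk' _ _ _ (by
      simp only [Tmx.subst, Tmx.rename, wk_subst, sub0, nilSub, Substx.cons, Substx.ext])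
  have s2 : Eqvx (Tmx.app (mkArrR (A := A) g).wk
        ((.lam (.app f.wk (.app (.var (.vs .vz)) (.var .vz))))
          : Tmx [Tyx.arrow A B] (Tyx.arrow A B')))
      (.lam (.app g.wk (.app (.lam (.app f.wk (.app (.var (.vs (.vs .vz))) (.var .vz))))
        (.var .vz)))) :=
    beta_wk' _ _ _ (by
      simp only [Tmx.subst, Tmx.rename, wk_subst, wk_rename, sub0, nilSub, Substx.cons,
        Substx.ext, Renx.ext])
  refine (Eqvx.congApp (Eqvx.refl _) s1).trans (s2.trans ?_)
  have s3 : Eqvx (Tmx.app (.lam (.app f.wk (.app (.var (.vs (.vs .vz))) (.var .vz))))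
        (.var .vz) : Tmx [A, Tyx.arrow A B] B')
      (.app f.wk (.app (.var (.vs .vz)) (.var .vz))) :=
    beta1' _ _ _ (by
      simp only [Tmx.subst1, Tmx.subst, Tmx.rename, wk_subst, Substx.cons])
  refine (Eqvx.congLam ((Eqvx.congApp (Eqvx.refl _) s3).trans ?_)).trans (Eqvx.eta (.var .vz))
  exact gf_inst e1 _

/-- `(A × B) → (A' × B)`. -/
def mkProdL {A A' B : Tyx ν} (h : Tmx ([] : Ctxx ν) (Tyx.arrow A A')) :
    Tmx ([] : Ctxx ν) (Tyx.arrow (Tyx.prod A B) (Tyx.prod A' B)) :=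
  .lam (.pair (.app h.wk (.p1 (.var .vz))) (.p2 (.var .vz)))

theorem prodL_half {A A' B : Tyx ν}
    {f : Tmx ([] : Ctxx ν) (Tyx.arrow A A')} {g : Tmx ([] : Ctxx ν) (Tyx.arrow A' A)}
    (e1 : Eqvx (Tmx.app g.wk (Tmx.app f.wk (.var .vz)) : Tmx [A] A) (.var .vz)) :
    Eqvx (Tmx.app (mkProdL (B := B) g).wk (Tmx.app (mkProdL (B := B) f).wk (.var .vz))
      : Tmx [Tyx.prod A B] (Tyx.prod A B)) (.var .vz) := by
  have s1 : Eqvx (Tmx.app (mkProdL (B := B) f).wk (.var .vz)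
        : Tmx [Tyx.prod A B] (Tyx.prod A' B))
      (.pair (.app f.wk (.p1 (.var .vz))) (.p2 (.var .vz))) :=
    beta_wk' _ _ _ (by simp only [Tmx.subst, wk_subst, sub0, Substx.cons])
  have s2 : Eqvx (Tmx.app (mkProdL (B := B) g).wk
        ((.pair (.app f.wk (.p1 (.var .vz))) (.p2 (.var .vz)))
          : Tmx [Tyx.prod A B] (Tyx.prod A' B)))
      (.pair (.app g.wk (.p1 (.pair (.app f.wk (.p1 (.var .vz))) (.p2 (.var .vz)))))
        (.p2 (.pair (.app f.wk (.p1 (.var .vz))) (.p2 (.var .vz))))) :=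
    beta_wk' _ _ _ (by simp only [Tmx.subst, wk_subst, sub0, Substx.cons])
  refine (Eqvx.congApp (Eqvx.refl _) s1).trans (s2.trans ?_)
  refine Eqvx.trans (Eqvx.congPair
    (Eqvx.congApp (Eqvx.refl _) (Eqvx.prodBeta1 _ _)) (Eqvx.prodBeta2 _ _)) ?_
  exact (Eqvx.congPair (gf_inst e1 _) (Eqvx.refl _)).trans (Eqvx.prodEta _)

/-- `(A × B) → (A × B')`. -/
def mkProdR {A B B' : Tyx ν} (h : Tmx ([] : Ctxx ν) (Tyx.arrow B B')) :
    Tmx ([] : Ctxx ν) (Tyx.arrow (Tyx.prod A B) (Tyx.prod A B')) :=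
  .lam (.pair (.p1 (.var .vz)) (.app h.wk (.p2 (.var .vz))))

theorem prodR_half {A B B' : Tyx ν}
    {f : Tmx ([] : Ctxx ν) (Tyx.arrow B B')} {g : Tmx ([] : Ctxx ν) (Tyx.arrow B' B)}
    (e1 : Eqvx (Tmx.app g.wk (Tmx.app f.wk (.var .vz)) : Tmx [B] B) (.var .vz)) :
    Eqvx (Tmx.app (mkProdR (A := A) g).wk (Tmx.app (mkProdR (A := A) f).wk (.var .vz))
      : Tmx [Tyx.prod A B] (Tyx.prod A B)) (.var .vz) := by
  have s1 : Eqvx (Tmx.app (mkProdR (A := A) f).wk (.var .vz)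
        : Tmx [Tyx.prod A B] (Tyx.prod A B'))
      (.pair (.p1 (.var .vz)) (.app f.wk (.p2 (.var .vz)))) :=
    beta_wk' _ _ _ (by simp only [Tmx.subst, wk_subst, sub0, Substx.cons])
  have s2 : Eqvx (Tmx.app (mkProdR (A := A) g).wk
        ((.pair (.p1 (.var .vz)) (.app f.wk (.p2 (.var .vz))))
          : Tmx [Tyx.prod A B] (Tyx.prod A B')))
      (.pair (.p1 (.pair (.p1 (.var .vz)) (.app f.wk (.p2 (.var .vz)))))
        (.app g.wk (.p2 (.pair (.p1 (.var .vz)) (.app f.wk (.p2 (.var .vz))))))) :=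
    beta_wk' _ _ _ (by simp only [Tmx.subst, wk_subst, sub0, Substx.cons])
  refine (Eqvx.congApp (Eqvx.refl _) s1).trans (s2.trans ?_)
  refine Eqvx.trans (Eqvx.congPair (Eqvx.prodBeta1 _ _)
    (Eqvx.congApp (Eqvx.refl _) (Eqvx.prodBeta2 _ _))) ?_
  exact (Eqvx.congPair (Eqvx.refl _) (gf_inst e1 _)).trans (Eqvx.prodEta _)

theorem Isox.arrL {A A' : Tyx ν} (B : Tyx ν) (h : Isox A A') :
    Isox (Tyx.arrow A B) (Tyx.arrow A' B) := by
  obtain ⟨f, g, e1, e2⟩ := h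
  exact ⟨mkArrL g, mkArrL f, arrL_half e1, arrL_half e2⟩

theorem Isox.arrR (A : Tyx ν) {B B' : Tyx ν} (h : Isox B B') :
    Isox (Tyx.arrow A B) (Tyx.arrow A B') := by
  obtain ⟨f, g, e1, e2⟩ := h
  exact ⟨mkArrR f, mkArrR g, arrR_half e1, arrR_half e2⟩

theorem Isox.prodL {A A' : Tyx ν} (B : Tyx ν) (h : Isox A A') :
    Isox (Tyx.prod A B) (Tyx.prod A' B) := by
  obtain ⟨f, g, e1, e2⟩ := h
  exact ⟨mkProdL f, mkProdL g, prodL_half e1, prodL_half e2⟩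

theorem Isox.prodR (A : Tyx ν) {B B' : Tyx ν} (h : Isox B B') :
    Isox (Tyx.prod A B) (Tyx.prod A B') := by
  obtain ⟨f, g, e1, e2⟩ := h
  exact ⟨mkProdR f, mkProdR g, prodR_half e1, prodR_half e2⟩

end Cong
section Base
variable {ν : Type}

theorem TyStep.isox {A B : Tyx ν} (h : TyStep A B) : Isox A B := by
  induction h with
  | arrProd A B₁ B₂ =>
    refine ⟨.lam (.pair (.lam (.p1 (.app (.var (.vs .vz)) (.var .vz))))
        (.lam (.p2 (.app (.var (.vs .vz)) (.var .vz))))),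
      .lam (.lam (.pair (.app (.p1 (.var (.vs .vz))) (.var .vz))
        (.app (.p2 (.var (.vs .vz))) (.var .vz)))), ?_, ?_⟩
    · refine (Eqvx.congApp (Eqvx.refl _) (beta_wk _ _)).trans ((beta_wk _ _).trans ?_)
      show Eqvx (Tmx.lam (.pair
        (.app (.p1 (.pair (.lam (.p1 (.app (.var (.vs (.vs .vz))) (.var .vz))))
          (.lam (.p2 (.app (.var (.vs (.vs .vz))) (.var .vz)))))) (.var .vz))
        (.app (.p2 (.pair (.lam (.p1 (.app (.var (.vs (.vs .vz))) (.var .vz))))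
          (.lam (.p2 (.app (.var (.vs (.vs .vz))) (.var .vz)))))) (.var .vz)))) (.var .vz)
      refine Eqvx.trans (Eqvx.congLam (Eqvx.congPair
        ((Eqvx.congApp (Eqvx.prodBeta1 _ _) (Eqvx.refl _)).trans
          (beta1' _ _ (.p1 (.app (.var (.vs .vz)) (.var .vz))) rfl))
        ((Eqvx.congApp (Eqvx.prodBeta2 _ _) (Eqvx.refl _)).trans
          (beta1' _ _ (.p2 (.app (.var (.vs .vz)) (.var .vz))) rfl)))) ?_
      refine Eqvx.trans (Eqvx.congLam
        (Eqvx.prodEta (.app (.var (.vs .vz)) (.var .vz)))) ?_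
      exact eta' (.var .vz) (.var (.vs .vz)) rfl
    · refine (Eqvx.congApp (Eqvx.refl _) (beta_wk _ _)).trans ((beta_wk _ _).trans ?_)
      show Eqvx (Tmx.pair
        (.lam (.p1 (.app (.lam (.pair (.app (.p1 (.var (.vs (.vs .vz)))) (.var .vz))
          (.app (.p2 (.var (.vs (.vs .vz)))) (.var .vz)))) (.var .vz))))
        (.lam (.p2 (.app (.lam (.pair (.app (.p1 (.var (.vs (.vs .vz)))) (.var .vz))
          (.app (.p2 (.var (.vs (.vs .vz)))) (.var .vz)))) (.var .vz))))) (.var .vz)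
      refine Eqvx.trans (Eqvx.congPair
        (Eqvx.congLam (Eqvx.congP1 (beta1' _ _
          (.pair (.app (.p1 (.var (.vs .vz))) (.var .vz))
            (.app (.p2 (.var (.vs .vz))) (.var .vz))) rfl)))
        (Eqvx.congLam (Eqvx.congP2 (beta1' _ _
          (.pair (.app (.p1 (.var (.vs .vz))) (.var .vz))
            (.app (.p2 (.var (.vs .vz))) (.var .vz))) rfl)))) ?_
      refine Eqvx.trans (Eqvx.congPair
        (Eqvx.congLam (Eqvx.prodBeta1 _ _)) (Eqvx.congLam (Eqvx.prodBeta2 _ _))) ?_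
      refine Eqvx.trans (Eqvx.congPair
        (eta' (.p1 (.var .vz)) (.p1 (.var (.vs .vz))) rfl)
        (eta' (.p2 (.var .vz)) (.p2 (.var (.vs .vz))) rfl)) ?_
      exact Eqvx.prodEta (.var .vz)
  | prodArr A₁ A₂ B =>
    refine ⟨.lam (.lam (.lam (.app (.var (.vs (.vs .vz)))
        (.pair (.var (.vs .vz)) (.var .vz))))),
      .lam (.lam (.app (.app (.var (.vs .vz)) (.p1 (.var .vz))) (.p2 (.var .vz)))), ?_, ?_⟩
    · refine (Eqvx.congApp (Eqvx.refl _) (beta_wk _ _)).trans ((beta_wk _ _).trans ?_)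
      show Eqvx (Tmx.lam (.app (.app
        (.lam (.lam (.app (.var (.vs (.vs (.vs .vz))))
          (.pair (.var (.vs .vz)) (.var .vz)))))
        (.p1 (.var .vz))) (.p2 (.var .vz)))) (.var .vz)
      refine Eqvx.trans (Eqvx.congLam (Eqvx.congApp
        (beta1' _ _ (.lam (.app (.var (.vs (.vs .vz)))
          (.pair (.p1 (.var (.vs .vz))) (.var .vz)))) rfl)
        (Eqvx.refl _))) ?_
      refine Eqvx.trans (Eqvx.congLam (beta1' _ _
        (.app (.var (.vs .vz)) (.pair (.p1 (.var .vz)) (.p2 (.var .vz)))) rfl)) ?_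
      refine Eqvx.trans (Eqvx.congLam
        (Eqvx.congApp (Eqvx.refl _) (Eqvx.prodEta (.var .vz)))) ?_
      exact eta' (.var .vz) (.var (.vs .vz)) rfl
    · refine (Eqvx.congApp (Eqvx.refl _) (beta_wk _ _)).trans ((beta_wk _ _).trans ?_)
      show Eqvx (Tmx.lam (.lam (.app
        (.lam (.app (.app (.var (.vs (.vs (.vs .vz)))) (.p1 (.var .vz)))
          (.p2 (.var .vz))))
        (.pair (.var (.vs .vz)) (.var .vz))))) (.var .vz)
      refine Eqvx.trans (Eqvx.congLam (Eqvx.congLam (beta1' _ _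
        (.app (.app (.var (.vs (.vs .vz)))
          (.p1 (.pair (.var (.vs .vz)) (.var .vz))))
          (.p2 (.pair (.var (.vs .vz)) (.var .vz)))) rfl))) ?_
      refine Eqvx.trans (Eqvx.congLam (Eqvx.congLam
        (Eqvx.congApp (Eqvx.congApp (Eqvx.refl _) (Eqvx.prodBeta1 _ _))
          (Eqvx.prodBeta2 _ _)))) ?_
      refine Eqvx.trans (Eqvx.congLam
        (eta' (.app (.var (.vs .vz)) (.var .vz))
          (.app (.var (.vs (.vs .vz))) (.var (.vs .vz))) rfl)) ?_
      exact eta' (.var .vz) (.var (.vs .vz)) rfl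
  | prodAssoc A B C =>
    refine ⟨.lam (.pair (.pair (.p1 (.var .vz)) (.p1 (.p2 (.var .vz))))
        (.p2 (.p2 (.var .vz)))),
      .lam (.pair (.p1 (.p1 (.var .vz)))
        (.pair (.p2 (.p1 (.var .vz))) (.p2 (.var .vz)))), ?_, ?_⟩
    · refine (Eqvx.congApp (Eqvx.refl _) (beta_wk _ _)).trans ((beta_wk _ _).trans ?_)
      refine Eqvx.trans (Eqvx.congPair
        ((Eqvx.congP1 (Eqvx.prodBeta1 _ _)).trans (Eqvx.prodBeta1 _ _))
        (Eqvx.congPair ((Eqvx.congP2 (Eqvx.prodBeta1 _ _)).trans (Eqvx.prodBeta2 _ _))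
          (Eqvx.prodBeta2 _ _))) ?_
      refine Eqvx.trans (Eqvx.congPair (Eqvx.refl _) (Eqvx.prodEta _)) ?_
      exact Eqvx.prodEta _
    · refine (Eqvx.congApp (Eqvx.refl _) (beta_wk _ _)).trans ((beta_wk _ _).trans ?_)
      refine Eqvx.trans (Eqvx.congPair
        (Eqvx.congPair (Eqvx.prodBeta1 _ _)
          ((Eqvx.congP1 (Eqvx.prodBeta2 _ _)).trans (Eqvx.prodBeta1 _ _)))
        ((Eqvx.congP2 (Eqvx.prodBeta2 _ _)).trans (Eqvx.prodBeta2 _ _))) ?_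
      refine Eqvx.trans (Eqvx.congPair (Eqvx.prodEta _) (Eqvx.refl _)) ?_
      exact Eqvx.prodEta _
  | arrUnit A =>
    refine ⟨.lam .k, .lam (.lam .k), ?_, ?_⟩
    · refine (Eqvx.congApp (Eqvx.refl _) (beta_wk _ _)).trans ((beta_wk _ _).trans ?_)
      show Eqvx (Tmx.lam .k) (.var .vz)
      refine Eqvx.trans (Eqvx.congLam
        (Eqvx.symm (Eqvx.unit (.app (.var (.vs .vz)) (.var .vz))))) ?_
      exact eta' (.var .vz) (.var (.vs .vz)) rfl
    · refine (Eqvx.congApp (Eqvx.refl _) (beta_wk _ _)).trans ((beta_wk _ _).trans ?_)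
      exact (Eqvx.unit _).symm
  | unitArr B =>
    refine ⟨.lam (.app (.var .vz) .k), .lam (.lam (.var (.vs .vz))), ?_, ?_⟩
    · refine (Eqvx.congApp (Eqvx.refl _) (beta_wk _ _)).trans ((beta_wk _ _).trans ?_)
      show Eqvx (Tmx.lam (.app (.var (.vs .vz)) .k)) (.var .vz)
      refine Eqvx.trans (Eqvx.congLam
        (Eqvx.congApp (Eqvx.refl _) (Eqvx.symm (Eqvx.unit (.var .vz))))) ?_
      exact eta' (.var .vz) (.var (.vs .vz)) rfl
    · refine (Eqvx.congApp (Eqvx.refl _) (beta_wk _ _)).trans ((beta_wk _ _).trans ?_)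
      exact Eqvx.beta _ _
  | prodUnit A =>
    refine ⟨.lam (.p1 (.var .vz)), .lam (.pair (.var .vz) .k), ?_, ?_⟩
    · refine (Eqvx.congApp (Eqvx.refl _) (beta_wk _ _)).trans ((beta_wk _ _).trans ?_)
      refine Eqvx.trans (Eqvx.congPair (Eqvx.refl _)
        (Eqvx.symm (Eqvx.unit (.p2 (.var .vz))))) ?_
      exact Eqvx.prodEta _
    · refine (Eqvx.congApp (Eqvx.refl _) (beta_wk _ _)).trans ((beta_wk _ _).trans ?_)
      exact Eqvx.prodBeta1 _ _
  | unitProd A =>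
    refine ⟨.lam (.p2 (.var .vz)), .lam (.pair .k (.var .vz)), ?_, ?_⟩
    · refine (Eqvx.congApp (Eqvx.refl _) (beta_wk _ _)).trans ((beta_wk _ _).trans ?_)
      refine Eqvx.trans (Eqvx.congPair (Eqvx.symm (Eqvx.unit (.p1 (.var .vz))))
        (Eqvx.refl _)) ?_
      exact Eqvx.prodEta _
    · refine (Eqvx.congApp (Eqvx.refl _) (beta_wk _ _)).trans ((beta_wk _ _).trans ?_)
      exact Eqvx.prodBeta2 _ _
  | arrL B _ ih => exact Isox.arrL B ih
  | arrR A _ ih => exact Isox.arrR A ih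
  | prodL B _ ih => exact Isox.prodL B ih
  | prodR A _ ih => exact Isox.prodR A ih

end Base
/--
**Lemma 8.1.** For every type `A` of Λ× one can construct an isomorphism `h : A → A^π`,
where `A^π` is the product normal form of `A` (i.e. the type, reachable from `A` by the
type reductions, to which no type reduction applies).
-/
theorem iso_to_product_normal_form {ν : Type} (A B : Tyx ν)
    (hred : Relation.ReflTransGen TyStep A B) (hpnf : PNF B) :
    ∃ h : Tmx ([] : Ctxx ν) (Tyx.arrow A B), IsIso h := by
  clear hpnf
  refine Isox.isIso ?_
  induction hred with
  | refl => exact Isox.refl A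
  | tail _ hstep ih => exact ih.trans hstep.isox
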